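/- Let φ be the ternary morphism with φ(0) = 01202120102, φ(1) = 01210201021, and φ(2) = 01210212021. Then φ preserves squarefreeness, and moreover, if w is a squarefree ternary word and p is a nonempty prefix of w, then φ(p) is a delicate squarefree ternary word. -/

import Mathlib

/-- A square is a word of the form XX with X nonempty. -/
def IsSquare' {α : Type*} (w : List α) : Prop :=
  ∃ X : List α, X ≠ [] ∧ w = X ++ X

/-- A word contains a square if some factor (contiguous subword) of it is a square. -/
def HasSquare {α : Type*} (w : List α) : Prop :=
  ∃ u, u <:+: w ∧ IsSquare' u

/-- A word is squarefree if none of its factors is a square. -/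
def SquareFree' {α : Type*} (w : List α) : Prop := ¬ HasSquare w

/-- A delicate squarefree ternary word: a nonempty squarefree word over {0,1,2}
such that changing any one of its letters to a different letter creates a square. -/
def DelicateSquareFree (w : List (Fin 3)) : Prop :=
  w ≠ [] ∧ SquareFree' w ∧
    ∀ (i : ℕ) (h : i < w.length) (a : Fin 3), a ≠ w.get ⟨i, h⟩ → HasSquare (w.set i a)

/-- Apply the morphism determined by letter images `h` to a word. -/
def applyMorphism {α : Type*} (h : α → List α) (w : List α) : List α := w.flatMap h

/-- The ternary morphism φ with φ(0) = 01202120102, φ(1) = 01210201021, φ(2) = 01210212021. -/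
def phi : Fin 3 → List (Fin 3) := fun a =>
  if a = 0 then [0,1,2,0,2,1,2,0,1,0,2]
  else if a = 1 then [0,1,2,1,0,2,0,1,0,2,1]
  else [0,1,2,1,0,2,1,2,0,2,1]

/-! The morphism `phi` is `11`-uniform and synchronizing: `phi a` occurs in `phi b ++ phi c` only
at offsets `0` and `11`. Hence a square of period at least `21` in `phi w` has period divisible
by `11`, and its two halves are made of whole blocks `phi a`, except for one block cut by the
square's border; that block is still determined by its part inside the square, because `phi a`
is determined both by its suffix of length `4` and by its prefix of length `7`. So the square
pulls back to a square of `w`. A square of period at most `20` has length at most `40`, so it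
lies inside the image of a factor of `w` of length at most `5`, and these are checked
exhaustively. Finally, changing one letter of `phi w` changes one letter of some block `phi a`,
and every such change already creates a square inside the block. -/

open Function

section Squares

variable {α : Type*}

theorem HasSquare.mono {u w : List α} (hu : HasSquare u) (huw : u <:+: w) : HasSquare w :=
  let ⟨v, hv, hsq⟩ := hu
  ⟨v, hv.trans huw, hsq⟩

theorem SquareFree'.infix {u w : List α} (hw : SquareFree' w) (huw : u <:+: w) :
    SquareFree' u :=
  fun hu => hw (hu.mono huw)

def IsSquareAt (w : List α) (s m : ℕ) : Prop :=
  0 < m ∧ s + 2 * m ≤ w.length ∧ ∀ i, s ≤ i → i < s + m → w[i]? = w[i + m]?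

theorem hasSquare_iff_exists_isSquareAt {w : List α} :
    HasSquare w ↔ ∃ s m, IsSquareAt w s m := by
  constructor
  · rintro ⟨_, ⟨p, q, rfl⟩, X, hX, rfl⟩
    refine ⟨p.length, X.length, List.length_pos_iff.mpr hX,
      by simp only [List.length_append]; omega, fun i hi hi' => ?_⟩
    simp only [List.append_assoc, List.getElem?_append]
    split_ifs <;> first | omega | congr 1; omega
  · rintro ⟨s, m, hm, hlen, hper⟩
    refine ⟨(w.drop s).take (m + m), ?_, (w.drop s).take m, ?_, ?_⟩
    · exact (List.take_prefix _ _).isInfix.trans (List.drop_suffix _ _).isInfix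
    · exact List.ne_nil_of_length_pos (by simp only [List.length_take, List.length_drop]; omega)
    · rw [List.take_add, List.drop_drop]
      congr 1
      refine List.ext_getElem? fun t => ?_
      simp only [List.getElem?_take, List.getElem?_drop]
      split_ifs with ht
      · rw [hper (s + t) (by omega) (by omega)]; congr 1; omega
      · rfl

theorem IsSquareAt.drop {w : List α} {s m : ℕ} (hsq : IsSquareAt w s m) {k : ℕ}
    (hk : k ≤ s) : IsSquareAt (w.drop k) (s - k) m := by
  obtain ⟨hm, hlen, hper⟩ := hsq
  refine ⟨hm, by simp only [List.length_drop]; omega, fun i hi hi' => ?_⟩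
  simp only [List.getElem?_drop]
  rw [hper (k + i) (by omega) (by omega)]; congr 1; omega

theorem IsSquareAt.of_append {u v : List α} {s m : ℕ} (hsq : IsSquareAt (u ++ v) s m)
    (hu : s + 2 * m ≤ u.length) : IsSquareAt u s m := by
  obtain ⟨hm, -, hper⟩ := hsq
  refine ⟨hm, hu, fun i hi hi' => ?_⟩
  have := hper i hi hi'
  rwa [List.getElem?_append_left (by omega), List.getElem?_append_left (by omega)] at this

theorem hasSquare_cons_iff {a : α} {w : List α} :
    HasSquare (a :: w) ↔ (∃ X, X ≠ [] ∧ X ++ X <+: a :: w) ∨ HasSquare w := by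
  simp only [HasSquare, IsSquare', List.infix_cons_iff]
  constructor
  · rintro ⟨u, hu | hu, X, hX, rfl⟩
    · exact .inl ⟨X, hX, hu⟩
    · exact .inr ⟨_, hu, X, hX, rfl⟩
  · rintro (⟨X, hX, hu⟩ | ⟨u, hu, X, hX, rfl⟩)
    · exact ⟨_, .inl hu, X, hX, rfl⟩
    · exact ⟨_, .inr hu, X, hX, rfl⟩

variable [DecidableEq α]

def hasSquarePrefixB (w : List α) : Bool :=
  (List.range (w.length / 2)).any fun m => w.take (m + 1) = (w.drop (m + 1)).take (m + 1)

def hasSquareB : List α → Bool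
  | [] => false
  | w@(_ :: t) => hasSquarePrefixB w || hasSquareB t

theorem hasSquarePrefixB_eq_true {w : List α} :
    hasSquarePrefixB w = true ↔ ∃ X, X ≠ [] ∧ X ++ X <+: w := by
  symm
  simp only [hasSquarePrefixB, List.any_eq_true, List.mem_range, decide_eq_true_eq]
  constructor
  · rintro ⟨X, hX, hXX⟩
    have hlen : X.length + X.length ≤ w.length := by simpa using hXX.length_le
    rw [List.prefix_iff_eq_take, List.length_append, List.take_add] at hXX
    obtain ⟨h1, h2⟩ := List.append_inj hXX (by simp only [List.length_take]; omega)
    refine ⟨X.length - 1, by have := List.length_pos_iff.mpr hX; omega, ?_⟩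
    rw [Nat.sub_add_cancel (List.length_pos_iff.mpr hX), ← h1, ← h2]
  · rintro ⟨m, hm, hXX⟩
    refine ⟨w.take (m + 1),
      List.ne_nil_of_length_pos (by simp only [List.length_take]; omega), ?_⟩
    nth_rw 2 [hXX]
    rw [← List.take_add]
    exact List.take_prefix _ _

theorem hasSquareB_eq_true : ∀ {w : List α}, hasSquareB w = true ↔ HasSquare w
  | [] => by
    simp only [hasSquareB, Bool.false_eq_true, false_iff]
    rintro ⟨u, hu, X, hX, rfl⟩
    simp_all [List.infix_nil]
  | _ :: t => by
    rw [hasSquare_cons_iff, hasSquareB, Bool.or_eq_true, hasSquarePrefixB_eq_true,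
      hasSquareB_eq_true]

instance : DecidablePred (HasSquare : List α → Prop) :=
  fun _ => decidable_of_iff _ hasSquareB_eq_true

instance : DecidablePred (SquareFree' : List α → Prop) :=
  fun w => inferInstanceAs (Decidable ¬HasSquare w)

end Squares

section Morphism

variable {α : Type*} {h : α → List α}

@[simp] theorem applyMorphism_nil : applyMorphism h [] = [] := rfl

@[simp] theorem applyMorphism_cons (a : α) (w : List α) :
    applyMorphism h (a :: w) = h a ++ applyMorphism h w :=
  List.flatMap_cons

theorem applyMorphism_append (u v : List α) :
    applyMorphism h (u ++ v) = applyMorphism h u ++ applyMorphism h v :=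
  List.flatMap_append

theorem hasSquare_set_applyMorphism
    (hset : ∀ a, ∀ r (hr : r < (h a).length), ∀ x, x ≠ (h a)[r] →
      HasSquare ((h a).set r x)) :
    ∀ (w : List α) (i : ℕ) (hi : i < (applyMorphism h w).length) (x : α),
      x ≠ (applyMorphism h w)[i] → HasSquare ((applyMorphism h w).set i x)
  | [], i, hi, _, _ => by simp at hi
  | a :: w, i, hi, x, hx => by
    simp only [applyMorphism_cons, List.set_append] at hx ⊢
    split_ifs with hia
    · rw [List.getElem_append_left hia] at hx
      exact (hset a i hia x hx).mono (List.prefix_append _ _).isInfix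
    · rw [List.getElem_append_right (by omega)] at hx
      refine (hasSquare_set_applyMorphism hset w _ ?_ x hx).mono (List.suffix_append _ _).isInfix
      simp only [applyMorphism_cons, List.length_append] at hi
      omega

variable {L : ℕ}

theorem length_applyMorphism (hL : ∀ a, (h a).length = L) (w : List α) :
    (applyMorphism h w).length = L * w.length := by
  induction w with
  | nil => simp
  | cons a w ih => simp [ih, hL, mul_add, add_comm]

theorem applyMorphism_drop (hL : ∀ a, (h a).length = L) (w : List α) (k : ℕ) :
    applyMorphism h (w.drop k) = (applyMorphism h w).drop (L * k) := by
  induction k generalizing w with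
  | zero => simp
  | succ k ih =>
    cases w with
    | nil => simp
    | cons a w =>
      rw [List.drop_succ_cons, ih, applyMorphism_cons, mul_add_one, add_comm, ← List.drop_drop,
        List.drop_left' (hL a)]

theorem getElem?_applyMorphism_of_drop_eq (hL : ∀ a, (h a).length = L) {w u v : List α}
    {k x : ℕ} (hk : w.drop k = u ++ v) (hx : x < L * u.length) :
    (applyMorphism h w)[L * k + x]? = (applyMorphism h u)[x]? := by
  rw [← List.getElem?_drop, ← applyMorphism_drop hL, hk, applyMorphism_append,
    List.getElem?_append_left (by rwa [length_applyMorphism hL])]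

theorem getElem?_applyMorphism_mul_add (hL : ∀ a, (h a).length = L) {w : List α} {k r : ℕ}
    (hk : k < w.length) (hr : r < L) :
    (applyMorphism h w)[L * k + r]? = (h w[k])[r]? := by
  rw [getElem?_applyMorphism_of_drop_eq hL (u := [w[k]]) (List.drop_eq_getElem_cons hk)
    (by simpa)]
  simp

def IsSynchronizing (h : α → List α) (L : ℕ) : Prop :=
  ∀ a b c, ∀ r < L, 0 < r → ((h b ++ h c).drop r).take L ≠ h a

namespace IsSquareAt

variable {w : List α} {s : ℕ}

theorem getElem?_image_eq (hL : ∀ a, (h a).length = L) {d : ℕ}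
    (hsq : IsSquareAt (applyMorphism h w) s (L * d)) {j r : ℕ} (hj : j < w.length)
    (hjd : j + d < w.length) (hr : r < L) (h1 : s ≤ L * j + r) (h2 : L * j + r < s + L * d) :
    (h w[j])[r]? = (h w[j + d])[r]? := by
  rw [← getElem?_applyMorphism_mul_add hL hj hr, ← getElem?_applyMorphism_mul_add hL hjd hr,
    hsq.2.2 _ h1 h2]
  congr 1
  ring

theorem getElem?_eq_of_injective_drop (hL : ∀ a, (h a).length = L) {p : ℕ}
    (hsuf : Injective fun a => (h a).drop (L - p)) {d : ℕ}
    (hsq : IsSquareAt (applyMorphism h w) s (L * d)) {j : ℕ} (h1 : s + p ≤ L * j + L)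
    (h2 : L * j + L ≤ s + L * d) : w[j]? = w[j + d]? := by
  have hm := hsq.1
  have hlen := hsq.2.1
  rw [length_applyMorphism hL] at hlen
  have hjd : j + d < w.length :=
    Nat.lt_of_mul_lt_mul_left (a := L)
      (by rw [mul_add]; have := Nat.pos_of_mul_pos_right hm; omega)
  have hj : j < w.length := by omega
  rw [List.getElem?_eq_getElem hj, List.getElem?_eq_getElem hjd]
  refine congrArg some (hsuf (List.ext_getElem? fun t => ?_))
  simp only [List.getElem?_drop]
  by_cases ht : L - p + t < L
  · exact hsq.getElem?_image_eq hL hj hjd ht (by omega) (by omega)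
  · rw [List.getElem?_eq_none (by rw [hL]; omega), List.getElem?_eq_none (by rw [hL]; omega)]

theorem getElem?_eq_of_injective_take (hL : ∀ a, (h a).length = L) {q : ℕ} (hq : 0 < q)
    (hpre : Injective fun a => (h a).take q) {d : ℕ}
    (hsq : IsSquareAt (applyMorphism h w) s (L * d)) {j : ℕ} (h1 : s ≤ L * j)
    (h2 : L * j + q ≤ s + L * d) : w[j]? = w[j + d]? := by
  have hlen := hsq.2.1
  rw [length_applyMorphism hL] at hlen
  have hjd : j + d < w.length :=
    Nat.lt_of_mul_lt_mul_left (a := L) (by rw [mul_add]; omega)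
  have hj : j < w.length := by omega
  rw [List.getElem?_eq_getElem hj, List.getElem?_eq_getElem hjd]
  refine congrArg some (hpre (List.ext_getElem? fun t => ?_))
  simp only [List.getElem?_take]
  split_ifs with ht
  · by_cases htL : t < L
    · exact hsq.getElem?_image_eq hL hj hjd htL (by omega) (by omega)
    · rw [List.getElem?_eq_none (by rw [hL]; omega), List.getElem?_eq_none (by rw [hL]; omega)]
  · rfl

theorem dvd_of_isSynchronizing (hL : ∀ a, (h a).length = L) (hsync : IsSynchronizing h L)
    {m : ℕ} (hsq : IsSquareAt (applyMorphism h w) s m) {k : ℕ} (hk : k < w.length)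
    (h1 : s ≤ L * k) (h2 : L * k + L ≤ s + m) : L ∣ m := by
  obtain ⟨hm, hlen, hper⟩ := hsq
  rw [length_applyMorphism hL] at hlen
  have hL0 : 0 < L := Nat.pos_of_ne_zero (by rintro rfl; omega)
  set j := (L * k + m) / L
  set r := (L * k + m) % L
  have hjr : L * j + r = L * k + m := Nat.div_add_mod _ _
  have hr : r < L := Nat.mod_lt _ hL0
  refine (Nat.dvd_add_right (dvd_mul_right L k)).mp (Nat.dvd_of_mod_eq_zero ?_)
  by_contra hr0
  have hj : j + 1 < w.length :=
    Nat.lt_of_mul_lt_mul_left (a := L) (by rw [mul_add]; omega)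
  have hdrop : w.drop j = [w[j], w[j + 1]] ++ w.drop (j + 2) := by
    rw [List.drop_eq_getElem_cons (by omega), List.drop_eq_getElem_cons hj]
    rfl
  refine hsync w[k] w[j] w[j + 1] r hr (Nat.pos_of_ne_zero hr0) (List.ext_getElem? fun t => ?_)
  simp only [List.getElem?_take, List.getElem?_drop]
  split_ifs with ht
  · have hblock := getElem?_applyMorphism_of_drop_eq hL hdrop (x := r + t)
      (by simp only [List.length_cons, List.length_nil]; omega)
    rw [← getElem?_applyMorphism_mul_add hL hk ht, hper _ (by omega) (by omega)]
    simp only [applyMorphism_cons, applyMorphism_nil, List.append_nil] at hblock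
    rw [← hblock]
    congr 1
    omega
  · rw [List.getElem?_eq_none (by rw [hL]; omega)]

theorem hasSquare_of_applyMorphism (hL : ∀ a, (h a).length = L) (hsync : IsSynchronizing h L)
    {p q : ℕ} (hsuf : Injective fun a => (h a).drop (L - p)) (hq : 0 < q)
    (hpre : Injective fun a => (h a).take q) (hpq : p + q ≤ L + 1) {m : ℕ}
    (hsq : IsSquareAt (applyMorphism h w) s m) (hm : 2 * L ≤ m + 1) : HasSquare w := by
  have hlen := hsq.2.1
  rw [length_applyMorphism hL] at hlen
  have hL0 : 0 < L := Nat.pos_of_ne_zero (by rintro rfl; have := hsq.1; omega)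
  obtain ⟨k, hk⟩ : ∃ k, s ≤ L * k ∧ L * k < s + L :=
    ⟨(s + L - 1) / L, by
      have h1 : L * ((s + L - 1) / L) + (s + L - 1) % L = s + L - 1 := Nat.div_add_mod _ _
      have h2 := Nat.mod_lt (s + L - 1) hL0
      omega⟩
  have hkn : k < w.length := Nat.lt_of_mul_lt_mul_left (a := L) (by omega)
  obtain ⟨d, rfl⟩ := hsq.dvd_of_isSynchronizing hL hsync hkn hk.1 (by omega)
  obtain ⟨d, rfl⟩ : ∃ d', d = d' + 1 :=
    Nat.exists_eq_add_one.mpr (Nat.pos_of_mul_pos_left hsq.1)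
  have hfull : Injective fun a => (h a).take L := fun a b hab =>
    hsuf.of_comp (f := List.drop (L - p))
      (by simpa only [List.take_of_length_le (hL _).le] using hab)
  have hmid : ∀ i, k ≤ i → i < k + d → w[i]? = w[i + (d + 1)]? := fun i hi hid =>
    hsq.getElem?_eq_of_injective_take hL hL0 hfull (hk.1.trans (Nat.mul_le_mul_left L hi))
      (by nlinarith)
  rw [hasSquare_iff_exists_isSquareAt]
  rcases Nat.lt_or_ge s (L * k) with hs | hs
  · obtain ⟨k, rfl⟩ : ∃ k', k = k' + 1 := Nat.exists_eq_add_one.mpr (by nlinarith)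
    rcases Nat.lt_or_ge (L * (k + 1)) (s + p) with hsp | hsp
    · -- the last block of the first half is fixed by its prefix, of length at least `q`
      have hn := Nat.lt_of_mul_lt_mul_left (a := L) (b := k + 2 * d + 2) (c := w.length)
        (by nlinarith)
      refine ⟨k + 1, d + 1, d.succ_pos, by omega, fun i hi hid => ?_⟩
      rcases Nat.lt_or_ge i (k + 1 + d) with hi' | hi'
      · exact hmid i hi hi'
      · rw [show i = k + 1 + d by omega]
        exact hsq.getElem?_eq_of_injective_take hL hq hpre (by nlinarith) (by nlinarith)
    · -- the block before the square is fixed by its suffix, of length at least `p`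
      refine ⟨k, d + 1, d.succ_pos, Nat.le_of_mul_le_mul_left (c := L) (by nlinarith) hL0,
        fun i hi hid => ?_⟩
      rcases Nat.lt_or_ge k i with hi' | hi'
      · exact hmid i hi' (by omega)
      · rw [show i = k by omega]
        exact hsq.getElem?_eq_of_injective_drop hL hsuf (by nlinarith) (by nlinarith)
  · refine ⟨k, d + 1, d.succ_pos, Nat.le_of_mul_le_mul_left (c := L) (by nlinarith) hL0,
      fun i hi hid => ?_⟩
    exact hsq.getElem?_eq_of_injective_take hL hL0 hfull
      (hk.1.trans (Nat.mul_le_mul_left L hi)) (by nlinarith)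

theorem exists_infix_length_le_five (hL : ∀ a, (h a).length = L) {m : ℕ}
    (hsq : IsSquareAt (applyMorphism h w) s m) (hm : m + 2 ≤ 2 * L) :
    ∃ v, v <:+: w ∧ v.length ≤ 5 ∧ HasSquare (applyMorphism h v) := by
  have hlen := hsq.2.1
  rw [length_applyMorphism hL] at hlen
  have hj : L * (s / L) ≤ s ∧ s < L * (s / L) + L := by
    have h1 : L * (s / L) + s % L = s := Nat.div_add_mod _ _
    have h2 := Nat.mod_lt s (show 0 < L by omega)
    omega
  refine ⟨(w.drop (s / L)).take 5, (List.take_prefix _ _).isInfix.trans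
    (List.drop_suffix _ _).isInfix, by simp, ?_⟩
  have hsq' := hsq.drop hj.1
  rw [← applyMorphism_drop hL, ← List.take_append_drop 5 (w.drop (s / L)),
    applyMorphism_append] at hsq'
  refine hasSquare_iff_exists_isSquareAt.mpr ⟨_, _, hsq'.of_append ?_⟩
  rw [length_applyMorphism hL, List.length_take, List.length_drop]
  rcases le_total 5 (w.length - s / L) with h5 | h5
  · rw [min_eq_left h5]
    omega
  · rw [min_eq_right h5, Nat.mul_sub]
    omega

end IsSquareAt

theorem squareFree_applyMorphism (hL : ∀ a, (h a).length = L) (hsync : IsSynchronizing h L)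
    {p q : ℕ} (hsuf : Injective fun a => (h a).drop (L - p)) (hq : 0 < q)
    (hpre : Injective fun a => (h a).take q) (hpq : p + q ≤ L + 1)
    (hshort : ∀ v, v.length ≤ 5 → SquareFree' v → SquareFree' (applyMorphism h v))
    {w : List α} (hw : SquareFree' w) : SquareFree' (applyMorphism h w) := by
  intro hsq
  obtain ⟨s, m, hsq⟩ := hasSquare_iff_exists_isSquareAt.mp hsq
  by_cases hm : 2 * L ≤ m + 1
  · exact hw (hsq.hasSquare_of_applyMorphism hL hsync hsuf hq hpre hpq hm)
  · obtain ⟨v, hv, hv5, hsqv⟩ := hsq.exists_infix_length_le_five hL (by omega)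
    exact hshort v hv5 (hw.infix hv) hsqv

end Morphism

theorem delicateSquareFree_applyMorphism {h : Fin 3 → List (Fin 3)} (hne : ∀ a, h a ≠ [])
    (hsf : ∀ w, SquareFree' w → SquareFree' (applyMorphism h w))
    (hset : ∀ a, ∀ r (hr : r < (h a).length), ∀ x, x ≠ (h a)[r] →
      HasSquare ((h a).set r x))
    {w : List (Fin 3)} (hw : SquareFree' w) (hw0 : w ≠ []) :
    DelicateSquareFree (applyMorphism h w) := by
  refine ⟨?_, hsf w hw, hasSquare_set_applyMorphism hset w⟩
  obtain ⟨a, t, rfl⟩ := List.exists_cons_of_ne_nil hw0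
  simp [hne a]

theorem length_phi : ∀ a, (phi a).length = 11 := by
  decide

theorem isSynchronizing_phi : IsSynchronizing phi 11 := by
  unfold IsSynchronizing
  decide

theorem injective_phi_drop : Injective fun a => (phi a).drop 7 := by
  decide

theorem injective_phi_take : Injective fun a => (phi a).take 7 := by
  decide

theorem squareFree_applyMorphism_phi_of_length_le_five :
    ∀ v : List (Fin 3), v.length ≤ 5 → SquareFree' v → SquareFree' (applyMorphism phi v)
  | [], _ => by decide
  | [a], _ => by revert a; decide +kernel
  | [a, b], _ => by revert a b; decide +kernel
  | [a, b, c], _ => by revert a b c; decide +kernel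
  | [a, b, c, d], _ => by revert a b c d; decide +kernel
  | [a, b, c, d, e], _ => by revert a b c d e; decide +kernel
  | _ :: _ :: _ :: _ :: _ :: _ :: _, hv => by simp only [List.length_cons] at hv; omega

theorem hasSquare_set_phi :
    ∀ a, ∀ r (hr : r < (phi a).length), ∀ x, x ≠ (phi a)[r] →
      HasSquare ((phi a).set r x) := by
  decide +kernel

theorem phi_preserves_squarefree_and_delicate :
    (∀ w : List (Fin 3), SquareFree' w → SquareFree' (applyMorphism phi w)) ∧
    (∀ w p : List (Fin 3), SquareFree' w → p ≠ [] → p <+: w →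
      DelicateSquareFree (applyMorphism phi p)) := by
  have hsf : ∀ w : List (Fin 3), SquareFree' w → SquareFree' (applyMorphism phi w) :=
    fun w => squareFree_applyMorphism length_phi isSynchronizing_phi (p := 4) injective_phi_drop
      (by norm_num) injective_phi_take (by norm_num) squareFree_applyMorphism_phi_of_length_le_five
  refine ⟨hsf, fun w p hw hp hpw => delicateSquareFree_applyMorphism ?_ hsf hasSquare_set_phi
    (hw.infix hpw.isInfix) hp⟩
  exact fun a => List.ne_nil_of_length_pos (by rw [length_phi]; norm_num)
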